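/- Let n ≥ 4 and let H(n) be the group presented by generators x_1,…,x_{2n} and relations H_orig(n). Then in H(n), each of x_{2n-7} and x_{2n-6} commutes with each of x_{2n-1} and x_{2n} (this is the simplification of the conjugated Q2 relations for the pair of indices i = n−3, j = n). -/

import Mathlib

/-- The descending product `X b * X (b-1) * ⋯ * X a` (equal to `1` when `b < a`). -/
def dprod {G : Type*} [Monoid G] (X : ℕ → G) (a b : ℕ) : G :=
  (((List.range' a (b + 1 - a)).reverse).map X).prod

/-- The set of relators expressing the cyclic system of relations
`[a₁, …, a_k]`, i.e. that all cyclic rotations of the product `a_k ⋯ a₁` are equal. -/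
def cycRels {G : Type*} [Group G] (l : List G) : Set G :=
  { r | ∃ k : ℕ, r = (l.rotate k).reverse.prod * (l.reverse.prod)⁻¹ }

/-- The `i`-th (1-based) generator of the free group on `Fin N`. -/
def gen (N : ℕ) (i : ℕ) : FreeGroup (Fin N) :=
  if h : 0 < N then FreeGroup.of ⟨(i - 1) % N, Nat.mod_lt _ h⟩ else 1

/-- The index set for the quadruples of type Q2: pairs `(i,j)` with `1 ≤ i < j ≤ n`,
`j - i > 1`, `i ≠ n-1`, `j ≠ n-1` and `(i,j) ≠ (n-2,n)`. -/
def QIdx (n : ℕ) : Set (ℕ × ℕ) :=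
  {p | 1 ≤ p.1 ∧ p.1 < p.2 ∧ p.2 ≤ n ∧ 1 < p.2 - p.1 ∧ p.1 ≠ n - 1 ∧ p.2 ≠ n - 1 ∧
       p ≠ (n - 2, n)}

/-- The relation set `H_orig(n)` on the generators `x₁, …, x₂ₙ`. -/
def Horig (n : ℕ) : Set (FreeGroup (Fin (2 * n))) :=
  let X : ℕ → FreeGroup (Fin (2 * n)) := gen (2 * n)
  -- (Q1)
  (⋃ i ∈ Set.Icc 2 (n - 2),
      (cycRels [X (2 * i), X (2 * n - 3)] ∪ cycRels [X (2 * i - 1), X (2 * n - 3)] ∪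
       cycRels [X (2 * i), (X (2 * n - 3))⁻¹ * X (2 * n - 2) * X (2 * n - 3)] ∪
       cycRels [X (2 * i - 1), (X (2 * n - 3))⁻¹ * X (2 * n - 2) * X (2 * n - 3)])) ∪
  -- (Q2)
  (⋃ p ∈ QIdx n,
      (cycRels [X (2 * p.1),
          (dprod X (2 * p.1 + 1) (2 * p.2 - 1))⁻¹ * X (2 * p.2) *
            dprod X (2 * p.1 + 1) (2 * p.2 - 1)] ∪
       cycRels [X (2 * p.1 - 1),
          (dprod X (2 * p.1) (2 * p.2 - 1))⁻¹ * X (2 * p.2) *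
            dprod X (2 * p.1) (2 * p.2 - 1)] ∪
       cycRels [X (2 * p.1),
          (dprod X (2 * p.1 + 1) (2 * p.2 - 2))⁻¹ * X (2 * p.2 - 1) *
            dprod X (2 * p.1 + 1) (2 * p.2 - 2)] ∪
       cycRels [X (2 * p.1 - 1),
          (dprod X (2 * p.1) (2 * p.2 - 2))⁻¹ * X (2 * p.2 - 1) *
            dprod X (2 * p.1) (2 * p.2 - 2)])) ∪
  -- (T1)
  (cycRels [X 2, X (2 * n - 3)] ∪ cycRels [X 1, X (2 * n - 3)] ∪
   cycRels [X 1, X 2, (X (2 * n - 3))⁻¹ * X (2 * n - 2) * X (2 * n - 3)]) ∪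
  -- (T2)
  (⋃ i ∈ Set.Icc 1 (n - 3),
      (cycRels [X (2 * i) * X (2 * i - 1) * (X (2 * i))⁻¹, X (2 * i + 1), X (2 * i + 2)] ∪
       cycRels [X (2 * i), X (2 * i + 2)] ∪ cycRels [X (2 * i), X (2 * i + 1)])) ∪
  -- (T3)
  (cycRels [(X (2 * n - 2) * X (2 * n - 3) * X (2 * n - 4)) * X (2 * n - 5) *
        (X (2 * n - 2) * X (2 * n - 3) * X (2 * n - 4))⁻¹, X (2 * n - 1), X (2 * n)] ∪
   cycRels [X (2 * n - 4),
      (X (2 * n - 2) * X (2 * n - 3))⁻¹ * X (2 * n) * (X (2 * n - 2) * X (2 * n - 3))] ∪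
   cycRels [X (2 * n - 4),
      (X (2 * n - 2) * X (2 * n - 3))⁻¹ * X (2 * n - 1) * (X (2 * n - 2) * X (2 * n - 3))]) ∪
  -- (T4)
  (cycRels [X (2 * n - 2), X (2 * n)] ∪ cycRels [X (2 * n - 3), X (2 * n)] ∪
   cycRels [X (2 * n - 3), X (2 * n - 2), X (2 * n - 1)])

/-- The simplified (conjugation-free) relation set `H_simp(n)` on the generators `x₁, …, x₂ₙ`. -/
def Hsimp (n : ℕ) : Set (FreeGroup (Fin (2 * n))) :=
  let X : ℕ → FreeGroup (Fin (2 * n)) := gen (2 * n)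
  -- (Q1')
  (⋃ i ∈ Set.Icc 2 (n - 2), ⋃ a ∈ ({2 * i - 1, 2 * i} : Set ℕ),
      ⋃ b ∈ ({2 * n - 3, 2 * n - 2} : Set ℕ), cycRels [X a, X b]) ∪
  -- (Q2')
  (⋃ p ∈ QIdx n, ⋃ a ∈ ({2 * p.1 - 1, 2 * p.1} : Set ℕ),
      ⋃ b ∈ ({2 * p.2 - 1, 2 * p.2} : Set ℕ), cycRels [X a, X b]) ∪
  -- (T1')
  (cycRels [X 1, X (2 * n - 3)] ∪ cycRels [X 2, X (2 * n - 3)] ∪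
   cycRels [X 1, X 2, X (2 * n - 2)]) ∪
  -- (T2')
  (⋃ i ∈ Set.Icc 1 (n - 3),
      (cycRels [X (2 * i - 1), X (2 * i + 1), X (2 * i + 2)] ∪
       cycRels [X (2 * i), X (2 * i + 1)] ∪ cycRels [X (2 * i), X (2 * i + 2)])) ∪
  -- (T3')
  (cycRels [X (2 * n - 4), X (2 * n - 1)] ∪ cycRels [X (2 * n - 4), X (2 * n)] ∪
   cycRels [X (2 * n - 5), X (2 * n - 1), X (2 * n)]) ∪
  -- (T4')
  (cycRels [X (2 * n - 2), X (2 * n)] ∪ cycRels [X (2 * n - 3), X (2 * n)] ∪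
   cycRels [X (2 * n - 3), X (2 * n - 2), X (2 * n - 1)])

/-- The image of the `i`-th (1-based) generator `xᵢ` in the presented group
`H(n) = ⟨x₁,…,x₂ₙ ∣ H_orig(n)⟩`. -/
def genH (n : ℕ) (i : ℕ) : PresentedGroup (Horig n) :=
  PresentedGroup.mk (Horig n) (gen (2 * n) i)

/-! Write `a₁, a₂, e, d, p, q, t, z` for `x₂ₙ₋₇, …, x₂ₙ`. By T4 and T3, `q p` and `d` commute with
`t` and `z`, so they drop out of the conjugators in the four Q2 relations for `(n - 3, n)`. By T2,
`a₂` commutes with `e`, which strips the rest of the conjugator and gives `[a₂, t]`, `[a₂, z]`;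
and `a₂ a₁ a₂⁻¹` commutes with `d e`, so conjugating `a₁` by `d e a₂` is conjugating it by `a₂`,
which then gives `[a₁, t]`, `[a₁, z]`. -/

theorem dprod_self {M : Type*} [Monoid M] (X : ℕ → M) (a : ℕ) : dprod X a a = X a := by
  simp [dprod]

theorem dprod_of_lt {M : Type*} [Monoid M] (X : ℕ → M) {a b : ℕ} (h : a < b) :
    dprod X a b = X b * dprod X a (b - 1) := by
  obtain ⟨k, rfl⟩ := Nat.exists_eq_add_of_lt h
  simp only [dprod, show a + k + 1 + 1 - a = k + 1 + 1 by omega,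
    show a + k + 1 - 1 + 1 - a = k + 1 by omega]
  rw [List.range'_1_concat]
  simp [add_assoc]

theorem map_dprod {M N F : Type*} [Monoid M] [Monoid N] [FunLike F M N] [MonoidHomClass F M N]
    (f : F) (X : ℕ → M) (a b : ℕ) : f (dprod X a b) = dprod (f ∘ X) a b := by
  simp [dprod, map_list_prod, List.map_reverse]

section Conjugation

variable {G : Type*} [Group G] {a b g u : G}

theorem commute_inv_conj_iff : Commute a (g⁻¹ * b * g) ↔ Commute (g * a * g⁻¹) b := by
  rw [← Commute.conj_iff g]
  group

theorem Commute.commute_conj_left_iff (hg : Commute g b) :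
    Commute (g * a * g⁻¹) b ↔ Commute a b := by
  rw [← commute_inv_conj_iff, hg.inv_mul_cancel]

theorem Commute.inv_conj_mul_left (hu : Commute u b) :
    (u * g)⁻¹ * b * (u * g) = g⁻¹ * b * g := by
  calc (u * g)⁻¹ * b * (u * g) = g⁻¹ * (u⁻¹ * b * u) * g := by group
    _ = g⁻¹ * b * g := by rw [hu.inv_mul_cancel]

theorem commute_of_commute_inv_conj {a h k t z : G} (hk : Commute k (h * a * h⁻¹))
    (hht : Commute h t) (hhz : Commute h z) (hut : Commute u t) (huz : Commute u z)
    (ht : Commute a ((u * (k * h))⁻¹ * t * (u * (k * h))))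
    (hz : Commute a ((t * u * (k * h))⁻¹ * z * (t * u * (k * h)))) :
    Commute a t ∧ Commute a z := by
  have hkh : k * h * a * (k * h)⁻¹ = h * a * h⁻¹ := by
    rw [← hk.mul_inv_cancel]
    group
  have hct : Commute (h * a * h⁻¹) t := by
    rwa [hut.inv_conj_mul_left, commute_inv_conj_iff, hkh] at ht
  have htkh : t * (k * h) * a * (t * (k * h))⁻¹ = h * a * h⁻¹ := by
    rw [← hct.symm.mul_inv_cancel, ← hkh]
    group
  have hcz : Commute (h * a * h⁻¹) z := by
    have hswap : t * u * (k * h) = u * (t * (k * h)) := by rw [← hut.eq, mul_assoc]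
    rwa [hswap, huz.inv_conj_mul_left, commute_inv_conj_iff, htkh] at hz
  exact ⟨hht.commute_conj_left_iff.mp hct, hhz.commute_conj_left_iff.mp hcz⟩

end Conjugation

namespace PresentedGroup

variable {α : Type*} {rels : Set (FreeGroup α)} {A B C : FreeGroup α}

theorem commute_mk_of_cycRels_subset (h : cycRels [A, B] ⊆ rels) :
    Commute (mk rels A) (mk rels B) := by
  simpa [Commute, SemiconjBy] using mk_eq_mk_of_mul_inv_mem (h ⟨1, rfl⟩)

theorem commute_mk_of_cycRels_subset_three (h : cycRels [A, B, C] ⊆ rels) :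
    Commute (mk rels A) (mk rels C * mk rels B) ∧ Commute (mk rels B * mk rels A) (mk rels C) :=
  ⟨by simpa [Commute, SemiconjBy, mul_assoc] using mk_eq_mk_of_mul_inv_mem (h ⟨1, rfl⟩),
   by simpa [Commute, SemiconjBy, mul_assoc] using mk_eq_mk_of_mul_inv_mem (h ⟨2, rfl⟩)⟩

end PresentedGroup

open PresentedGroup

section Relations

variable (n : ℕ)

theorem genH_T4 :
    Commute (genH n (2 * n - 2)) (genH n (2 * n)) ∧ Commute (genH n (2 * n - 3)) (genH n (2 * n)) ∧
      Commute (genH n (2 * n - 2) * genH n (2 * n - 3)) (genH n (2 * n - 1)) := by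
  simp only [genH]
  exact ⟨commute_mk_of_cycRels_subset fun _ hr => Or.inr (Or.inl (Or.inl hr)),
    commute_mk_of_cycRels_subset fun _ hr => Or.inr (Or.inl (Or.inr hr)),
    (commute_mk_of_cycRels_subset_three fun _ hr => Or.inr (Or.inr hr)).2⟩

theorem genH_T3 :
    Commute (genH n (2 * n - 4)) ((genH n (2 * n - 2) * genH n (2 * n - 3))⁻¹ * genH n (2 * n) *
        (genH n (2 * n - 2) * genH n (2 * n - 3))) ∧
      Commute (genH n (2 * n - 4)) ((genH n (2 * n - 2) * genH n (2 * n - 3))⁻¹ *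
        genH n (2 * n - 1) * (genH n (2 * n - 2) * genH n (2 * n - 3))) := by
  have h₁ := commute_mk_of_cycRels_subset (rels := Horig n)
    fun _ hr => Or.inl (Or.inr (Or.inl (Or.inr hr)))
  have h₂ := commute_mk_of_cycRels_subset (rels := Horig n) fun _ hr => Or.inl (Or.inr (Or.inr hr))
  simp only [map_mul, map_inv] at h₁ h₂
  exact ⟨h₁, h₂⟩

variable {n}

theorem genH_T2_last (hn : 4 ≤ n) :
    Commute (genH n (2 * n - 6) * genH n (2 * n - 7) * (genH n (2 * n - 6))⁻¹)
        (genH n (2 * n - 4) * genH n (2 * n - 5)) ∧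
      Commute (genH n (2 * n - 6)) (genH n (2 * n - 5)) := by
  have hi : n - 3 ∈ Set.Icc 1 (n - 3) := ⟨by omega, le_rfl⟩
  have h₁ := (commute_mk_of_cycRels_subset_three (rels := Horig n)
    fun _ hr => Or.inl (Or.inl (Or.inr (Set.mem_biUnion hi (Or.inl (Or.inl hr)))))).1
  have h₂ := commute_mk_of_cycRels_subset (rels := Horig n)
    fun _ hr => Or.inl (Or.inl (Or.inr (Set.mem_biUnion hi (Or.inr hr))))
  simp only [map_mul, map_inv, show 2 * (n - 3) = 2 * n - 6 by omega,
    show 2 * n - 6 - 1 = 2 * n - 7 by omega, show 2 * n - 6 + 1 = 2 * n - 5 by omega,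
    show 2 * n - 6 + 2 = 2 * n - 4 by omega] at h₁ h₂
  exact ⟨h₁, h₂⟩

theorem genH_Q2_last (hn : 4 ≤ n) :
    Commute (genH n (2 * n - 6)) ((dprod (genH n) (2 * n - 5) (2 * n - 1))⁻¹ * genH n (2 * n) *
        dprod (genH n) (2 * n - 5) (2 * n - 1)) ∧
      Commute (genH n (2 * n - 7)) ((dprod (genH n) (2 * n - 6) (2 * n - 1))⁻¹ * genH n (2 * n) *
        dprod (genH n) (2 * n - 6) (2 * n - 1)) ∧
      Commute (genH n (2 * n - 6)) ((dprod (genH n) (2 * n - 5) (2 * n - 2))⁻¹ *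
        genH n (2 * n - 1) * dprod (genH n) (2 * n - 5) (2 * n - 2)) ∧
      Commute (genH n (2 * n - 7)) ((dprod (genH n) (2 * n - 6) (2 * n - 2))⁻¹ *
        genH n (2 * n - 1) * dprod (genH n) (2 * n - 6) (2 * n - 2)) := by
  have hp : (n - 3, n) ∈ QIdx n := by
    refine ⟨by omega, by omega, le_rfl, by omega, by omega, by omega, ?_⟩
    simp only [ne_eq, Prod.mk.injEq, not_and]
    omega
  have hQ2 {r} (hr : r ∈ _) : r ∈ Horig n :=
    Or.inl (Or.inl (Or.inl (Or.inl (Or.inr (Set.mem_biUnion hp hr)))))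
  have h₁ := commute_mk_of_cycRels_subset fun _ hr => hQ2 (Or.inl (Or.inl (Or.inl hr)))
  have h₂ := commute_mk_of_cycRels_subset fun _ hr => hQ2 (Or.inl (Or.inl (Or.inr hr)))
  have h₃ := commute_mk_of_cycRels_subset fun _ hr => hQ2 (Or.inl (Or.inr hr))
  have h₄ := commute_mk_of_cycRels_subset fun _ hr => hQ2 (Or.inr hr)
  simp only [map_mul, map_inv, map_dprod, show 2 * (n - 3) = 2 * n - 6 by omega,
    show 2 * n - 6 - 1 = 2 * n - 7 by omega, show 2 * n - 6 + 1 = 2 * n - 5 by omega] at h₁ h₂ h₃ h₄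
  exact ⟨h₁, h₂, h₃, h₄⟩

end Relations

/-- In `H(n) = ⟨x₁,…,x₂ₙ ∣ H_orig(n)⟩`, each of `x₂ₙ₋₇, x₂ₙ₋₆` commutes with each of
`x₂ₙ₋₁, x₂ₙ` (the simplification of the conjugated Q2 relations for `i = n-3`, `j = n`). -/
theorem Q2_last_simplified (n : ℕ) (hn : 4 ≤ n) :
    ∀ a ∈ ({2 * n - 7, 2 * n - 6} : Set ℕ), ∀ b ∈ ({2 * n - 1, 2 * n} : Set ℕ),
      genH n a * genH n b = genH n b * genH n a := by
  set x := genH n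
  obtain ⟨hqz, hpz, hqpt⟩ := genH_T4 n
  obtain ⟨hdz, hdt⟩ := genH_T3 n
  obtain ⟨hc, ha₂e⟩ := genH_T2_last hn
  obtain ⟨R₁, R₂, R₃, R₄⟩ := genH_Q2_last hn
  have hqpz := hqz.mul_left hpz
  rw [hqpz.inv_mul_cancel] at hdz
  rw [hqpt.inv_mul_cancel] at hdt
  simp (disch := omega) only [dprod_of_lt, Nat.sub_sub, Nat.reduceAdd, dprod_self] at R₁ R₂ R₃ R₄
  obtain ⟨ha₂t, ha₂z⟩ := commute_of_commute_inv_conj (h := 1) (k := x (2 * n - 5))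
    (u := x (2 * n - 2) * x (2 * n - 3) * x (2 * n - 4)) (by simpa using ha₂e.symm)
    (.one_left _) (.one_left _) (hqpt.mul_left hdt) (hqpz.mul_left hdz)
    (by simpa only [mul_assoc, mul_one] using R₃) (by simpa only [mul_assoc, mul_one] using R₁)
  obtain ⟨ha₁t, ha₁z⟩ := commute_of_commute_inv_conj (h := x (2 * n - 6))
    (k := x (2 * n - 4) * x (2 * n - 5)) (u := x (2 * n - 2) * x (2 * n - 3)) hc.symm ha₂t ha₂z
    hqpt hqpz (by simpa only [mul_assoc] using R₄) (by simpa only [mul_assoc] using R₂)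
  rintro a (rfl | rfl) b (rfl | rfl)
  exacts [ha₁t, ha₁z, ha₂t, ha₂z]
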